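/- For every real number z, e^{-z} - 1 + z ≥ z²/(2 + |z|). -/

import Mathlib

open Real

lemma aux_g_nonneg {z : ℝ} (hz : 0 ≤ z) :
    0 ≤ Real.exp (-z) * (2 + z) + z - 2 := by
  set g : ℝ → ℝ := fun x => Real.exp (-x) * (2 + x) + x - 2 with hg
  have hderiv : ∀ x : ℝ, HasDerivAt g (1 - (1 + x) * Real.exp (-x)) x := by
    intro x
    have h1 : HasDerivAt (fun x : ℝ => Real.exp (-x)) (-Real.exp (-x)) x := by
      exact ((Real.hasDerivAt_exp (-x)).comp x (hasDerivAt_neg x)).congr_deriv (by ring)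
    have h2 : HasDerivAt (fun x : ℝ => (2 : ℝ) + x) 1 x :=
      (hasDerivAt_id x).const_add 2
    have h3 := (h1.mul h2)
    have h4 := (h3.add (hasDerivAt_id x)).sub_const 2
    exact h4.congr_deriv (by ring)
  have hmono : MonotoneOn g (Set.Ici 0) := by
    apply monotoneOn_of_deriv_nonneg (convex_Ici 0)
    · exact (Continuous.continuousOn (by continuity))
    · intro x _
      exact (hderiv x).differentiableAt.differentiableWithinAt
    · intro x hx
      rw [(hderiv x).deriv]
      have hx0 : (0:ℝ) ≤ x := le_of_lt (by simpa using hx)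
      have h1 : (1 + x) * Real.exp (-x) ≤ Real.exp x * Real.exp (-x) := by
        have := Real.add_one_le_exp x
        nlinarith [Real.exp_pos (-x)]
      rw [← Real.exp_add, add_neg_cancel, Real.exp_zero] at h1
      linarith
  have h0 : g 0 = 0 := by simp [hg]
  have := hmono (Set.self_mem_Ici) (by exact hz) hz
  simpa [hg, h0] using this

theorem exp_neg_sub_one_add_ge (z : ℝ) :
    Real.exp (-z) - 1 + z ≥ z ^ 2 / (2 + |z|) := by
  have habs : (0:ℝ) < 2 + |z| := by positivity
  rw [ge_iff_le, div_le_iff₀ habs]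
  rcases le_or_gt 0 z with hz | hz
  · rw [abs_of_nonneg hz]
    have := aux_g_nonneg hz
    nlinarith [this]
  · rw [abs_of_neg hz]
    have hw : 0 ≤ -z := by linarith
    have h := Real.quadratic_le_exp_of_nonneg hw
    nlinarith [h, sq_nonneg z, mul_nonneg (mul_nonneg hw hw) hw]
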